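/- arXiv:2503.06673 — 10 statements merged into one kernel-verified Lean document; each statement's English description precedes it below -/
import Mathlib

section
/- Let (X,d) be a complete metric space with a ccc geodesic bicombing σ, let o ∈ X and C > 0. For any two distinct σ-rays ξ,ζ with ξ(0) = ζ(0) = o there exists a unique t > 0 with d(ξ(t),ζ(t)) = C. Defining d_{o,C}(ξ,ζ) := 1/t for distinct σ-rays ξ,ζ emanating from o (where t is this unique value) and d_{o,C}(ξ,ξ) := 0, the function d_{o,C} is a metric on the set of σ-rays emanating from o. -/
open Metric Set

variable {X : Type*} [MetricSpace X]

/-- A geodesic bicombing on a metric space: a continuous choice of constant-speed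
geodesics, parametrized on `[0,1]`. -/
def IsGeodesicBicombing (σ : X → X → ℝ → X) : Prop :=
  ContinuousOn (fun p : X × X × ℝ => σ p.1 p.2.1 p.2.2)
    {p : X × X × ℝ | p.2.2 ∈ Set.Icc (0 : ℝ) 1} ∧
  (∀ x y : X, σ x y 0 = x) ∧
  (∀ x y : X, σ x y 1 = y) ∧
  (∀ x y : X, ∀ s ∈ Set.Icc (0 : ℝ) 1, ∀ t ∈ Set.Icc (0 : ℝ) 1,
    dist (σ x y s) (σ x y t) = |s - t| * dist x y)

/-- A bicombing is conical. -/
def IsConical (σ : X → X → ℝ → X) : Prop :=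
  ∀ x y x' y' : X, ∀ t ∈ Set.Icc (0 : ℝ) 1,
    dist (σ x y t) (σ x' y' t) ≤ (1 - t) * dist x x' + t * dist y y'

/-- A bicombing is consistent. -/
def IsConsistent (σ : X → X → ℝ → X) : Prop :=
  ∀ x y : X, ∀ s t l : ℝ, 0 ≤ s → s ≤ t → t ≤ 1 → l ∈ Set.Icc (0 : ℝ) 1 →
    σ (σ x y s) (σ x y t) l = σ x y ((1 - l) * s + l * t)

/-- A ccc bicombing: a geodesic bicombing that is consistent and conical. -/
def IsCCC (σ : X → X → ℝ → X) : Prop :=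
  IsGeodesicBicombing σ ∧ IsConsistent σ ∧ IsConical σ

/-- A `σ`-ray: a unit-speed geodesic ray compatible with the bicombing `σ`
(encoded as a map on `ℝ` which is constant on `(-∞,0]`). -/
def IsRay (σ : X → X → ℝ → X) (ξ : ℝ → X) : Prop :=
  (∀ t : ℝ, t ≤ 0 → ξ t = ξ 0) ∧
  (∀ s t : ℝ, 0 ≤ s → 0 ≤ t → dist (ξ s) (ξ t) = |s - t|) ∧
  (∀ t : ℝ, 0 ≤ t → ∀ s ∈ Set.Icc (0 : ℝ) 1, σ (ξ 0) (ξ t) s = ξ (s * t))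

/-- Two rays are asymptotic: their distance at time `t` is uniformly bounded for `t ≥ 0`. -/
def Asymptotic (ξ ζ : ℝ → X) : Prop :=
  ∃ M : ℝ, ∀ t : ℝ, 0 ≤ t → dist (ξ t) (ζ t) ≤ M

/-- `dC` is the function `d_{o,C}` on σ-rays emanating from `o`: it vanishes on the
diagonal, and for distinct rays it equals `1/t` where `t > 0` satisfies
`d(ξ(t),ζ(t)) = C`. -/
def DoCSpec (σ : X → X → ℝ → X) (o : X) (C : ℝ)
    (dC : (ℝ → X) → (ℝ → X) → ℝ) : Prop :=
  (∀ ξ : ℝ → X, IsRay σ ξ → ξ 0 = o → dC ξ ξ = 0) ∧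
  (∀ ξ ζ : ℝ → X, IsRay σ ξ → IsRay σ ζ → ξ 0 = o → ζ 0 = o → ξ ≠ ζ →
    ∃ t : ℝ, 0 < t ∧ dist (ξ t) (ζ t) = C ∧ dC ξ ζ = 1 / t)

/-- Convexity: for rays from the same point, `t ↦ dist (ξ t) (ζ t) / t` is nondecreasing. -/
lemma ray_convex {σ : X → X → ℝ → X} (hσ : IsCCC σ) {ξ ζ : ℝ → X}
    (hξ : IsRay σ ξ) (hζ : IsRay σ ζ) (h0 : ξ 0 = ζ 0)
    {s t : ℝ} (hs : 0 ≤ s) (hst : s ≤ t) :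
    dist (ξ s) (ζ s) * t ≤ s * dist (ξ t) (ζ t) := by
  rcases eq_or_lt_of_le (hs.trans hst) with ht | ht
  · have hs0 : s = 0 := le_antisymm (hst.trans ht.ge) hs
    subst hs0
    rw [← ht, h0, dist_self]
  · set r := s / t with hrdef
    have hr0 : 0 ≤ r := div_nonneg hs ht.le
    have hr1 : r ≤ 1 := (div_le_one ht).mpr hst
    have hrt : r * t = s := div_mul_cancel₀ s ht.ne'
    have e1 : σ (ξ 0) (ξ t) r = ξ s := by
      rw [hξ.2.2 t (hs.trans hst) r ⟨hr0, hr1⟩, hrt]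
    have e2 : σ (ζ 0) (ζ t) r = ζ s := by
      rw [hζ.2.2 t (hs.trans hst) r ⟨hr0, hr1⟩, hrt]
    have hcon := hσ.2.2 (ξ 0) (ξ t) (ζ 0) (ζ t) r ⟨hr0, hr1⟩
    rw [e1, e2, h0, dist_self] at hcon
    -- hcon : dist (ξ s) (ζ s) ≤ (1 - r) * 0 + r * dist (ξ t) (ζ t)
    have hcon' : dist (ξ s) (ζ s) ≤ r * dist (ξ t) (ζ t) := by linarith
    calc dist (ξ s) (ζ s) * t ≤ (r * dist (ξ t) (ζ t)) * t :=
          mul_le_mul_of_nonneg_right hcon' ht.le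
      _ = s * dist (ξ t) (ζ t) := by rw [mul_comm r, mul_assoc, hrt, mul_comm]

/-- Existence of a time where the distance between two distinct rays equals `C`. -/
lemma ray_exists_dist_eq {σ : X → X → ℝ → X} (hσ : IsCCC σ) {ξ ζ : ℝ → X}
    (hξ : IsRay σ ξ) (hζ : IsRay σ ζ) (h0 : ξ 0 = ζ 0) (hne : ξ ≠ ζ)
    {C : ℝ} (hC : 0 < C) :
    ∃ t : ℝ, 0 < t ∧ dist (ξ t) (ζ t) = C := by
  obtain ⟨t₀, ht₀⟩ := Function.ne_iff.mp hne
  have ht₀pos : 0 < t₀ := by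
    by_contra h
    push_neg at h
    exact ht₀ (by rw [hξ.1 t₀ h, hζ.1 t₀ h, h0])
  set δ := dist (ξ t₀) (ζ t₀) with hδdef
  have hδpos : 0 < δ := dist_pos.mpr ht₀
  set T := max t₀ (C * t₀ / δ) with hTdef
  have hT0 : 0 < T := lt_of_lt_of_le ht₀pos (le_max_left _ _)
  have hTt₀ : t₀ ≤ T := le_max_left _ _
  have hTB : C * t₀ / δ ≤ T := le_max_right _ _
  have hconv := ray_convex hσ hξ hζ h0 ht₀pos.le hTt₀
  -- hconv : δ * T ≤ t₀ * dist (ξ T) (ζ T)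
  have hfT : C ≤ dist (ξ T) (ζ T) := by
    have h1 : C * t₀ ≤ δ * T := by
      rw [div_le_iff₀ hδpos] at hTB
      linarith
    nlinarith
  -- continuity of the distance function on [0, T]
  set f : ℝ → ℝ := fun t => dist (ξ t) (ζ t) with hfdef
  have hlip : LipschitzOnWith 2 f (Icc 0 T) := by
    apply LipschitzOnWith.of_dist_le_mul
    intro a ha b hb
    calc dist (f a) (f b) ≤ dist (ξ a) (ξ b) + dist (ζ a) (ζ b) :=
          dist_dist_dist_le _ _ _ _
      _ = |a - b| + |a - b| := by rw [hξ.2.1 a b ha.1 hb.1, hζ.2.1 a b ha.1 hb.1]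
      _ = 2 * dist a b := by rw [Real.dist_eq]; push_cast; ring
  have hf0 : f 0 = 0 := by simp [hfdef, h0]
  have hmem : C ∈ Icc (f 0) (f T) := ⟨by rw [hf0]; exact hC.le, hfT⟩
  obtain ⟨t, htmem, hft⟩ := intermediate_value_Icc hT0.le hlip.continuousOn hmem
  refine ⟨t, ?_, hft⟩
  rcases eq_or_lt_of_le htmem.1 with h | h
  · exfalso
    rw [← h] at hft
    rw [hf0] at hft
    exact hC.ne hft
  · exact h

/-- Uniqueness of the time where the distance equals `C > 0`. -/
lemma ray_unique_dist_eq {σ : X → X → ℝ → X} (hσ : IsCCC σ) {ξ ζ : ℝ → X}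
    (hξ : IsRay σ ξ) (hζ : IsRay σ ζ) (h0 : ξ 0 = ζ 0)
    {C : ℝ} (hC : 0 < C) {t₁ t₂ : ℝ}
    (h₁ : 0 < t₁ ∧ dist (ξ t₁) (ζ t₁) = C)
    (h₂ : 0 < t₂ ∧ dist (ξ t₂) (ζ t₂) = C) : t₁ = t₂ := by
  rcases le_total t₁ t₂ with h | h
  · have := ray_convex hσ hξ hζ h0 h₁.1.le h
    rw [h₁.2, h₂.2] at this
    -- C * t₂ ≤ t₁ * C
    have : t₂ ≤ t₁ := by nlinarith
    linarith
  · have := ray_convex hσ hξ hζ h0 h₂.1.le h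
    rw [h₁.2, h₂.2] at this
    have : t₁ ≤ t₂ := by nlinarith
    linarith

/-- **The function `d_{o,C}` is well defined and is a metric** on the set of σ-rays
emanating from `o` (Proposition `quasisym (i)`). -/
theorem dOC_isMetric [CompleteSpace X]
    (σ : X → X → ℝ → X) (hσ : IsCCC σ) (o : X) (C : ℝ) (hC : 0 < C) :
    (∀ ξ ζ : ℝ → X, IsRay σ ξ → IsRay σ ζ → ξ 0 = o → ζ 0 = o → ξ ≠ ζ →
      ∃! t : ℝ, 0 < t ∧ dist (ξ t) (ζ t) = C) ∧
    (∀ dC : (ℝ → X) → (ℝ → X) → ℝ, DoCSpec σ o C dC →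
      ∀ ξ ζ θ : ℝ → X, IsRay σ ξ → IsRay σ ζ → IsRay σ θ →
        ξ 0 = o → ζ 0 = o → θ 0 = o →
        0 ≤ dC ξ ζ ∧ (dC ξ ζ = 0 ↔ ξ = ζ) ∧ dC ξ ζ = dC ζ ξ ∧
          dC ξ θ ≤ dC ξ ζ + dC ζ θ) := by
  constructor
  · intro ξ ζ hξ hζ hξ0 hζ0 hne
    have h0 : ξ 0 = ζ 0 := hξ0.trans hζ0.symm
    obtain ⟨t, ht⟩ := ray_exists_dist_eq hσ hξ hζ h0 hne hC
    exact ⟨t, ht, fun t' ht' => ray_unique_dist_eq hσ hξ hζ h0 hC ht' ht⟩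
  · intro dC hdC ξ ζ θ hξ hζ hθ hξ0 hζ0 hθ0
    -- general nonnegativity
    have hnn : ∀ α β : ℝ → X, IsRay σ α → IsRay σ β → α 0 = o → β 0 = o →
        0 ≤ dC α β := by
      intro α β hα hβ hα0 hβ0
      by_cases h : α = β
      · subst h; rw [hdC.1 α hα hα0]
      · obtain ⟨t, ht, -, he⟩ := hdC.2 α β hα hβ hα0 hβ0 h
        rw [he]; positivity
    refine ⟨hnn ξ ζ hξ hζ hξ0 hζ0, ?_, ?_, ?_⟩
    · -- dC ξ ζ = 0 ↔ ξ = ζ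
      constructor
      · intro hz
        by_contra h
        obtain ⟨t, ht, -, he⟩ := hdC.2 ξ ζ hξ hζ hξ0 hζ0 h
        rw [he] at hz
        exact (one_div_pos.mpr ht).ne' hz
      · rintro rfl
        exact hdC.1 ξ hξ hξ0
    · -- symmetry
      by_cases h : ξ = ζ
      · subst h; rfl
      · obtain ⟨t₁, ht₁, hd₁, he₁⟩ := hdC.2 ξ ζ hξ hζ hξ0 hζ0 h
        obtain ⟨t₂, ht₂, hd₂, he₂⟩ := hdC.2 ζ ξ hζ hξ hζ0 hξ0 (Ne.symm h)
        rw [dist_comm] at hd₂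
        have : t₁ = t₂ := ray_unique_dist_eq hσ hξ hζ (hξ0.trans hζ0.symm) hC
          ⟨ht₁, hd₁⟩ ⟨ht₂, hd₂⟩
        rw [he₁, he₂, this]
    · -- triangle inequality
      by_cases hxz : ξ = θ
      · subst hxz
        rw [hdC.1 ξ hξ hξ0]
        have := hnn ξ ζ hξ hζ hξ0 hζ0
        have := hnn ζ ξ hζ hξ hζ0 hξ0
        linarith
      by_cases hxy : ξ = ζ
      · subst hxy
        rw [hdC.1 ξ hξ hξ0]
        linarith
      by_cases hyz : ζ = θ
      · subst hyz
        rw [hdC.1 ζ hζ hζ0]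
        linarith
      obtain ⟨t₁, ht₁, hd₁, he₁⟩ := hdC.2 ξ ζ hξ hζ hξ0 hζ0 hxy
      obtain ⟨t₂, ht₂, hd₂, he₂⟩ := hdC.2 ζ θ hζ hθ hζ0 hθ0 hyz
      obtain ⟨t₃, ht₃, hd₃, he₃⟩ := hdC.2 ξ θ hξ hθ hξ0 hθ0 hxz
      set s := t₁ * t₂ / (t₁ + t₂) with hsdef
      have h12 : (0:ℝ) < t₁ + t₂ := by linarith
      have hs0 : 0 < s := by positivity
      have hs1 : s ≤ t₁ := by
        rw [hsdef, div_le_iff₀ h12]; nlinarith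
      have hs2 : s ≤ t₂ := by
        rw [hsdef, div_le_iff₀ h12]; nlinarith
      have hconv1 := ray_convex hσ hξ hζ (hξ0.trans hζ0.symm) hs0.le hs1
      have hconv2 := ray_convex hσ hζ hθ (hζ0.trans hθ0.symm) hs0.le hs2
      rw [hd₁] at hconv1
      rw [hd₂] at hconv2
      -- hconv1 : dist (ξ s) (ζ s) * t₁ ≤ s * C, similarly hconv2
      have hb1 : dist (ξ s) (ζ s) ≤ s * C / t₁ := (le_div_iff₀ ht₁).mpr hconv1
      have hb2 : dist (ζ s) (θ s) ≤ s * C / t₂ := (le_div_iff₀ ht₂).mpr hconv2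
      have hsum : s * C / t₁ + s * C / t₂ = C := by
        rw [hsdef]
        field_simp
        ring
      have hkey : dist (ξ s) (θ s) ≤ C := by
        calc dist (ξ s) (θ s) ≤ dist (ξ s) (ζ s) + dist (ζ s) (θ s) :=
              dist_triangle _ _ _
          _ ≤ s * C / t₁ + s * C / t₂ := add_le_add hb1 hb2
          _ = C := hsum
      have hst₃ : s ≤ t₃ := by
        rcases le_total s t₃ with h | h
        · exact h
        · have := ray_convex hσ hξ hθ (hξ0.trans hθ0.symm) ht₃.le h
          rw [hd₃] at this
          -- C * s ≤ t₃ * dist (ξ s) (θ s) ≤ t₃ * C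
          nlinarith
      have h1s : 1 / s = 1 / t₁ + 1 / t₂ := by
        rw [hsdef]
        field_simp
        ring
      rw [he₁, he₂, he₃]
      calc 1 / t₃ ≤ 1 / s := one_div_le_one_div_of_le hs0 hst₃
        _ = 1 / t₁ + 1 / t₂ := h1s
end

section
/- Let (X,d) be a complete metric space with a ccc geodesic bicombing σ, let o ∈ X and 0 < C ≤ C'. Then for all σ-rays ξ,ζ emanating from o one has d_{o,C'}(ξ,ζ) ≤ d_{o,C}(ξ,ζ) ≤ (C'/C)·d_{o,C'}(ξ,ζ); in particular the identity map from the set of σ-rays emanating from o with metric d_{o,C} to the same set with metric d_{o,C'} is bi-Lipschitz (hence a quasisymmetry). -/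
open Metric Set

variable {X : Type*} [MetricSpace X]

theorem ray_dist_convex {σ : X → X → ℝ → X} (hσ : IsCCC σ) {ξ ζ : ℝ → X}
    (hξ : IsRay σ ξ) (hζ : IsRay σ ζ) (h0 : ξ 0 = ζ 0)
    {s t : ℝ} (hs : 0 ≤ s) (hst : s ≤ t) (ht : 0 < t) :
    dist (ξ s) (ζ s) ≤ (s / t) * dist (ξ t) (ζ t) := by
  have hl : s / t ∈ Set.Icc (0:ℝ) 1 :=
    ⟨div_nonneg hs ht.le, (div_le_one ht).mpr hst⟩
  have hxs : σ (ξ 0) (ξ t) (s / t) = ξ s := by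
    rw [hξ.2.2 t ht.le (s/t) hl, div_mul_cancel₀ _ ht.ne']
  have hzs : σ (ζ 0) (ζ t) (s / t) = ζ s := by
    rw [hζ.2.2 t ht.le (s/t) hl, div_mul_cancel₀ _ ht.ne']
  have := hσ.2.2 (ξ 0) (ξ t) (ζ 0) (ζ t) (s/t) hl
  rw [hxs, hzs, h0, dist_self] at this
  linarith

/-- **Changing the parameter `C` gives bi-Lipschitz equivalent metrics `d_{o,C}`**
(Proposition `quasisym (iii)`): for `0 < C ≤ C'` one has
`d_{o,C'} ≤ d_{o,C} ≤ (C'/C) · d_{o,C'}`. -/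
theorem dOC_parameter_biLipschitz [CompleteSpace X]
    (σ : X → X → ℝ → X) (hσ : IsCCC σ) (o : X)
    (C C' : ℝ) (hC : 0 < C) (hCC' : C ≤ C')
    (dC dC' : (ℝ → X) → (ℝ → X) → ℝ)
    (hdC : DoCSpec σ o C dC) (hdC' : DoCSpec σ o C' dC') :
    ∀ ξ ζ : ℝ → X, IsRay σ ξ → IsRay σ ζ → ξ 0 = o → ζ 0 = o →
      dC' ξ ζ ≤ dC ξ ζ ∧ dC ξ ζ ≤ (C' / C) * dC' ξ ζ := by
  intro ξ ζ hξ hζ hξo hζo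
  by_cases hne : ξ = ζ
  · subst hne
    rw [hdC.1 ξ hξ hξo, hdC'.1 ξ hξ hξo]
    constructor <;> simp
  · obtain ⟨t, ht, hdt, hval⟩ := hdC.2 ξ ζ hξ hζ hξo hζo hne
    obtain ⟨t', ht', hdt', hval'⟩ := hdC'.2 ξ ζ hξ hζ hξo hζo hne
    have h0 : ξ 0 = ζ 0 := by rw [hξo, hζo]
    have htt' : t ≤ t' := by
      by_contra h
      push_neg at h
      have := ray_dist_convex hσ hξ hζ h0 ht'.le h.le ht
      rw [hdt, hdt'] at this
      nlinarith [(div_lt_one ht).mpr h]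
    have hkey : C * t' ≤ C' * t := by
      have := ray_dist_convex hσ hξ hζ h0 ht.le htt' (ht.trans_le htt')
      rw [hdt, hdt'] at this
      have h2 : C * t' ≤ (t / t') * C' * t' := by nlinarith
      rw [div_mul_eq_mul_div, div_mul_eq_mul_div,
        mul_div_assoc, div_self (ht.trans_le htt').ne', mul_one] at h2
      linarith
    rw [hval, hval']
    constructor
    · exact one_div_le_one_div_of_le ht htt'
    · rw [div_mul_div_comm, mul_one, div_le_div_iff₀ ht (by positivity), one_mul]
      linarith
end

section
/- Let X be a complete metric space, let G be a finite group acting on X by isometries, and suppose X admits a conical, G-equivariant geodesic bicombing σ. Then the action of G on X has a fixed point: there exists x ∈ X with g·x = x for all g ∈ G. -/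
open Metric Set

variable {X : Type*} [MetricSpace X]

/-! The fixed point is the barycenter of an orbit, for a barycenter map on `n`-tuples that is
invariant under permutations of the entries and commutes with the action of `G`
(the construction of Es-Sahib and Heinich). For `n = 2` it is the common limit of the iteration
`(x, y) ↦ (σ x y ½, σ y x ½)`, which halves the distance by conicality. From `n ≥ 2` points to
`n + 1`, it is the common limit of the iteration replacing each `uᵢ` by the barycenter of the
other `n` points, which shrinks all pairwise distances by the factor `1/n`. -/

open Filter Function Topology

section Bicombing

variable {σ : X → X → ℝ → X}

namespace IsGeodesicBicombing

lemma dist_left (hσ : IsGeodesicBicombing σ) (x y : X) {t : ℝ} (ht : t ∈ Icc (0 : ℝ) 1) :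
    dist x (σ x y t) = t * dist x y := by
  have h := hσ.2.2.2 x y 0 ⟨le_rfl, zero_le_one⟩ t ht
  rwa [hσ.2.1, zero_sub, abs_neg, abs_of_nonneg ht.1] at h

lemma dist_right (hσ : IsGeodesicBicombing σ) (x y : X) {t : ℝ} (ht : t ∈ Icc (0 : ℝ) 1) :
    dist (σ x y t) y = (1 - t) * dist x y := by
  have h := hσ.2.2.2 x y t ht 1 ⟨zero_le_one, le_rfl⟩
  rwa [hσ.2.2.1, abs_sub_comm, abs_of_nonneg (sub_nonneg.2 ht.2)] at h

end IsGeodesicBicombing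

lemma half_mem_Icc : (2⁻¹ : ℝ) ∈ Icc (0 : ℝ) 1 := by norm_num

/-- Compare both midpoints with the midpoint of `x` and `σ y x ½`. -/
lemma dist_midpoint_swap_le (hσ : IsGeodesicBicombing σ) (hconical : IsConical σ) (x y : X) :
    dist (σ x y 2⁻¹) (σ y x 2⁻¹) ≤ dist x y / 2 := by
  set m := σ y x 2⁻¹
  have hxm : dist x m = dist x y / 2 := by
    rw [dist_comm, hσ.dist_right y x half_mem_Icc, dist_comm y x]; ring
  have hmy : dist y m = dist x y / 2 := by
    rw [hσ.dist_left y x half_mem_Icc, dist_comm y x]; ring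
  calc dist (σ x y 2⁻¹) m
      ≤ dist (σ x y 2⁻¹) (σ x m 2⁻¹) + dist (σ x m 2⁻¹) m := dist_triangle _ _ _
    _ ≤ (1 - 2⁻¹) * dist x x + 2⁻¹ * dist y m + (1 - 2⁻¹) * dist x m := by
        gcongr
        · exact hconical x y x m 2⁻¹ half_mem_Icc
        · exact (hσ.dist_right x m half_mem_Icc).le
    _ = dist x y / 2 := by rw [dist_self, hxm, hmy]; ring

end Bicombing

section Spread

variable {ι : Type*} [Fintype ι]

def spread (u : ι → X) : ℝ := ∑ i, ∑ j, dist (u i) (u j)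

lemma sum_dist_le_spread (u : ι → X) (i : ι) : ∑ j, dist (u i) (u j) ≤ spread u :=
  Finset.single_le_sum (f := fun i => ∑ j, dist (u i) (u j))
    (fun _ _ => Finset.sum_nonneg fun _ _ => dist_nonneg) (Finset.mem_univ i)

lemma dist_le_spread (u : ι → X) (i j : ι) : dist (u i) (u j) ≤ spread u :=
  (Finset.single_le_sum (fun _ _ => dist_nonneg) (Finset.mem_univ j)).trans
    (sum_dist_le_spread u i)

lemma spread_nonneg (u : ι → X) : 0 ≤ spread u :=
  Finset.sum_nonneg fun _ _ => Finset.sum_nonneg fun _ _ => dist_nonneg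

lemma spread_const (z : X) : spread (fun _ : ι => z) = 0 := by
  simp [spread]

end Spread

structure IsContractingStep {ι : Type*} [Fintype ι] (F : (ι → X) → (ι → X)) (c : ℝ) : Prop where
  nonneg : 0 ≤ c
  lt_one : c < 1
  spread_le : ∀ u, spread (F u) ≤ c * spread u
  dist_map_le : ∀ u i, dist (u i) (F u i) ≤ spread u

namespace IsContractingStep

variable {ι : Type*} [Fintype ι] {F : (ι → X) → (ι → X)} {c : ℝ}

lemma spread_iterate_le (hF : IsContractingStep F c) (u : ι → X) (t : ℕ) :
    spread (F^[t] u) ≤ c ^ t * spread u := by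
  induction t with
  | zero => simp
  | succ t ih =>
    rw [iterate_succ_apply', pow_succ', mul_assoc]
    exact (hF.spread_le _).trans (mul_le_mul_of_nonneg_left ih hF.nonneg)

lemma dist_iterate_succ_le (hF : IsContractingStep F c) (u : ι → X) (i : ι) (t : ℕ) :
    dist (F^[t] u i) (F^[t + 1] u i) ≤ spread u * c ^ t := by
  rw [iterate_succ_apply', mul_comm]
  exact (hF.dist_map_le _ i).trans (hF.spread_iterate_le u t)

lemma tendsto_spread_iterate (hF : IsContractingStep F c) (u : ι → X) :
    Tendsto (fun t => spread (F^[t] u)) atTop (𝓝 0) := by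
  have hgeom : Tendsto (fun t => c ^ t * spread u) atTop (𝓝 0) := by
    simpa using (tendsto_pow_atTop_nhds_zero_of_lt_one hF.nonneg hF.lt_one).mul_const (spread u)
  exact squeeze_zero (fun t => spread_nonneg _) (hF.spread_iterate_le u) hgeom

end IsContractingStep

section IterateLimit

variable [CompleteSpace X] [Nonempty X] {m : ℕ} {F : (Fin (m + 1) → X) → (Fin (m + 1) → X)}
  {c : ℝ}

noncomputable def iterateLimit (F : (Fin (m + 1) → X) → (Fin (m + 1) → X))
    (u : Fin (m + 1) → X) : X :=
  limUnder atTop fun t => F^[t] u 0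

namespace IsContractingStep

lemma tendsto_iterateLimit (hF : IsContractingStep F c) (u : Fin (m + 1) → X) (i : Fin (m + 1)) :
    Tendsto (fun t => F^[t] u i) atTop (𝓝 (iterateLimit F u)) := by
  have h₀ : Tendsto (fun t => F^[t] u 0) atTop (𝓝 (iterateLimit F u)) :=
    (cauchySeq_of_le_geometric c _ hF.lt_one (hF.dist_iterate_succ_le u 0)).tendsto_limUnder
  exact h₀.congr_dist <| squeeze_zero (fun _ => dist_nonneg)
    (fun t => dist_le_spread (F^[t] u) 0 i) (hF.tendsto_spread_iterate u)

lemma iterateLimit_const (hF : IsContractingStep F c) (z : X) :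
    iterateLimit F (fun _ => z) = z := by
  have h := dist_le_of_le_geometric_of_tendsto₀ c _ hF.lt_one
    (hF.dist_iterate_succ_le (fun _ => z) 0) (hF.tendsto_iterateLimit (fun _ => z) 0)
  rw [spread_const, zero_div] at h
  exact (dist_le_zero.1 h).symm

lemma mul_dist_iterateLimit_le (hF : IsContractingStep F c)
    (hsum : ∀ u v, ∑ i, dist (F u i) (F v i) ≤ ∑ i, dist (u i) (v i)) (u v : Fin (m + 1) → X) :
    (m + 1 : ℕ) * dist (iterateLimit F u) (iterateLimit F v) ≤ ∑ i, dist (u i) (v i) := by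
  have hiter : ∀ t, ∑ i, dist (F^[t] u i) (F^[t] v i) ≤ ∑ i, dist (u i) (v i) := by
    intro t
    induction t with
    | zero => rfl
    | succ t ih => rw [iterate_succ_apply', iterate_succ_apply']; exact (hsum _ _).trans ih
  have hlim : Tendsto (fun t => ∑ i, dist (F^[t] u i) (F^[t] v i)) atTop
      (𝓝 (∑ _i : Fin (m + 1), dist (iterateLimit F u) (iterateLimit F v))) :=
    tendsto_finsetSum _ fun i _ => (hF.tendsto_iterateLimit u i).dist (hF.tendsto_iterateLimit v i)
  simpa using le_of_tendsto' hlim hiter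

lemma iterateLimit_comp_perm (hF : IsContractingStep F c)
    (hperm : ∀ (π : Equiv.Perm (Fin (m + 1))) u, F (u ∘ π) = F u ∘ π)
    (u : Fin (m + 1) → X) (π : Equiv.Perm (Fin (m + 1))) :
    iterateLimit F (u ∘ π) = iterateLimit F u := by
  have hcomm : ∀ t, F^[t] (u ∘ π) = F^[t] u ∘ π := fun t =>
    Commute.iterate_left (f := F) (g := (· ∘ π)) (hperm π) t u
  refine tendsto_nhds_unique (hF.tendsto_iterateLimit (u ∘ π) 0) ?_
  simpa only [hcomm, comp_apply] using hF.tendsto_iterateLimit u (π 0)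

lemma iterateLimit_smul {G : Type*} [SMul G X] [ContinuousConstSMul G X]
    (hF : IsContractingStep F c) (hsmul : ∀ (g : G) u, F (g • u) = g • F u)
    (g : G) (u : Fin (m + 1) → X) :
    iterateLimit F (g • u) = g • iterateLimit F u := by
  have hcomm : ∀ t, F^[t] (g • u) = g • F^[t] u := fun t =>
    Commute.iterate_left (f := F) (g := (g • ·)) (hsmul g) t u
  refine tendsto_nhds_unique (hF.tendsto_iterateLimit (g • u) 0) ?_
  simpa only [hcomm, Pi.smul_apply] using (hF.tendsto_iterateLimit u 0).const_smul g

end IsContractingStep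

end IterateLimit

structure Barycenter (X : Type*) [MetricSpace X] (G : Type*) [SMul G X] (n : ℕ) where
  toFun : (Fin n → X) → X
  mul_dist_le : ∀ u v, n * dist (toFun u) (toFun v) ≤ ∑ i, dist (u i) (v i)
  comp_perm : ∀ u (π : Equiv.Perm (Fin n)), toFun (u ∘ π) = toFun u
  const : ∀ z, toFun (fun _ => z) = z
  smul : ∀ (g : G) u, toFun (g • u) = g • toFun u

namespace Barycenter

variable {G : Type*} [SMul G X] {n : ℕ}

instance : CoeFun (Barycenter X G n) fun _ => (Fin n → X) → X := ⟨toFun⟩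

def one : Barycenter X G 1 where
  toFun u := u 0
  mul_dist_le u v := by simp
  comp_perm u π := by rw [comp_apply, Subsingleton.elim (π 0) 0]
  const _ := rfl
  smul _ _ := rfl

noncomputable def ofContractingStep [CompleteSpace X] [Nonempty X] [ContinuousConstSMul G X]
    {m : ℕ} {F : (Fin (m + 1) → X) → (Fin (m + 1) → X)} {c : ℝ} (hF : IsContractingStep F c)
    (hsum : ∀ u v, ∑ i, dist (F u i) (F v i) ≤ ∑ i, dist (u i) (v i))
    (hperm : ∀ (π : Equiv.Perm (Fin (m + 1))) u, F (u ∘ π) = F u ∘ π)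
    (hsmul : ∀ (g : G) u, F (g • u) = g • F u) : Barycenter X G (m + 1) where
  toFun := iterateLimit F
  mul_dist_le := hF.mul_dist_iterateLimit_le hsum
  comp_perm := hF.iterateLimit_comp_perm hperm
  const := hF.iterateLimit_const
  smul := hF.iterateLimit_smul hsmul

end Barycenter

noncomputable def midpointStep (σ : X → X → ℝ → X) (u : Fin 2 → X) : Fin 2 → X :=
  fun i => σ (u i) (u i.rev) 2⁻¹

section Midpoint

variable {σ : X → X → ℝ → X}

lemma isContractingStep_midpointStep (hσ : IsGeodesicBicombing σ) (hconical : IsConical σ) :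
    IsContractingStep (midpointStep σ) 2⁻¹ where
  nonneg := by norm_num
  lt_one := by norm_num
  spread_le u := by
    have := dist_midpoint_swap_le hσ hconical (u 0) (u 1)
    have hrev₀ : (0 : Fin 2).rev = 1 := rfl
    have hrev₁ : (1 : Fin 2).rev = 0 := rfl
    simp only [spread, midpointStep, Fin.sum_univ_two, hrev₀, hrev₁, dist_self,
      dist_comm (u 1) (u 0), dist_comm (σ (u 1) _ _) (σ (u 0) _ _)]
    linarith
  dist_map_le u i := by
    rw [midpointStep, hσ.dist_left _ _ half_mem_Icc]
    exact (mul_le_of_le_one_left dist_nonneg (by norm_num)).trans (dist_le_spread u i i.rev)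

lemma sum_dist_midpointStep_le (hconical : IsConical σ) (u v : Fin 2 → X) :
    ∑ i, dist (midpointStep σ u i) (midpointStep σ v i) ≤ ∑ i, dist (u i) (v i) :=
  calc ∑ i, dist (midpointStep σ u i) (midpointStep σ v i)
      ≤ ∑ i, ((1 - 2⁻¹) * dist (u i) (v i) + 2⁻¹ * dist (u i.rev) (v i.rev)) :=
        Finset.sum_le_sum fun i _ => hconical _ _ _ _ _ half_mem_Icc
    _ = ∑ i, dist (u i) (v i) := by
        rw [Finset.sum_add_distrib, ← Finset.mul_sum, ← Finset.mul_sum,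
          Fintype.sum_equiv Fin.revPerm (fun i => dist (u i.rev) (v i.rev))
            (fun i => dist (u i) (v i)) fun _ => rfl]
        ring

noncomputable def Barycenter.midpoint [CompleteSpace X] [Nonempty X]
    {G : Type*} [SMul G X] [ContinuousConstSMul G X]
    (hσ : IsGeodesicBicombing σ) (hconical : IsConical σ)
    (hequiv : ∀ (g : G) (x y : X), ∀ t ∈ Icc (0 : ℝ) 1, g • σ x y t = σ (g • x) (g • y) t) :
    Barycenter X G 2 :=
  ofContractingStep (isContractingStep_midpointStep hσ hconical) (sum_dist_midpointStep_le hconical)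
    (fun π u => by
      have hrev : ∀ i, π i.rev = (π i).rev := by revert π; decide
      funext i
      simp [midpointStep, hrev])
    (fun g u => funext fun i => (hequiv g _ _ _ half_mem_Icc).symm)

end Midpoint

namespace Barycenter

variable {G : Type*} [SMul G X] {n : ℕ} (B : Barycenter X G n)

lemma apply_comp_eq_of_range_eq {α : Type*} (u : α → X) {f g : Fin n → α}
    (hf : Injective f) (hg : Injective g) (hfg : range f = range g) : B (u ∘ f) = B (u ∘ g) := by
  let π : Equiv.Perm (Fin n) :=
    (Equiv.ofInjective g hg).trans ((Equiv.setCongr hfg.symm).trans (Equiv.ofInjective f hf).symm)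
  have hπ : f ∘ π = g := funext fun k => Equiv.apply_ofInjective_symm hf _
  rw [← hπ, ← comp_assoc, B.comp_perm]

def succStep (u : Fin (n + 1) → X) : Fin (n + 1) → X := fun i => B (u ∘ i.succAbove)

lemma succStep_comp_perm (π : Equiv.Perm (Fin (n + 1))) (u : Fin (n + 1) → X) :
    B.succStep (u ∘ π) = B.succStep u ∘ π := by
  funext i
  refine B.apply_comp_eq_of_range_eq u (π.injective.comp Fin.succAbove_right_injective)
    Fin.succAbove_right_injective ?_
  change range (π ∘ i.succAbove) = _
  rw [range_comp, Fin.range_succAbove, Fin.range_succAbove, image_compl_eq π.bijective,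
    image_singleton]

lemma succStep_smul (g : G) (u : Fin (n + 1) → X) : B.succStep (g • u) = g • B.succStep u :=
  funext fun i => B.smul g (u ∘ i.succAbove)

/-- The points `succStep u i` and `succStep u j` are barycenters of `n`-tuples differing in
exactly one entry, `u j` versus `u i`. -/
lemma mul_dist_succStep_le (u : Fin (n + 1) → X) (i j : Fin (n + 1)) :
    n * dist (B.succStep u i) (B.succStep u j) ≤ dist (u i) (u j) := by
  rcases eq_or_ne i j with rfl | hij
  · simp
  obtain ⟨k₀, hk₀⟩ := Fin.exists_succAbove_eq hij
  have hswap : B.succStep u i = B.succStep (u ∘ Equiv.swap i j) j := by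
    rw [succStep_comp_perm, comp_apply, Equiv.swap_apply_right]
  calc n * dist (B.succStep u i) (B.succStep u j)
      ≤ ∑ k, dist (u (Equiv.swap i j (j.succAbove k))) (u (j.succAbove k)) := by
        rw [hswap]; exact B.mul_dist_le _ _
    _ = dist (u i) (u j) := by
        rw [Finset.sum_eq_single k₀ _ (by simp), hk₀, Equiv.swap_apply_left, dist_comm]
        intro k _ hk
        have hki : j.succAbove k ≠ i := hk₀ ▸ (Fin.succAbove_right_injective.ne hk)
        rw [Equiv.swap_apply_of_ne_of_ne hki (Fin.succAbove_ne j k), dist_self]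

lemma mul_spread_succStep_le (u : Fin (n + 1) → X) : n * spread (B.succStep u) ≤ spread u := by
  simp only [spread, Finset.mul_sum]
  exact Finset.sum_le_sum fun i _ => Finset.sum_le_sum fun j _ => B.mul_dist_succStep_le u i j

lemma mul_dist_succStep_self_le (u : Fin (n + 1) → X) (i : Fin (n + 1)) :
    n * dist (u i) (B.succStep u i) ≤ spread u :=
  calc n * dist (u i) (B.succStep u i) = n * dist (B.succStep u i) (B fun _ => u i) := by
        rw [B.const, dist_comm]
    _ ≤ ∑ k, dist (u (i.succAbove k)) (u i) := B.mul_dist_le _ _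
    _ = ∑ j, dist (u i) (u j) := by
        rw [Fin.sum_univ_succAbove (fun j => dist (u i) (u j)) i, dist_self, zero_add]
        exact Finset.sum_congr rfl fun k _ => dist_comm _ _
    _ ≤ spread u := sum_dist_le_spread u i

lemma sum_dist_succStep_le (hn : 0 < n) (u v : Fin (n + 1) → X) :
    ∑ i, dist (B.succStep u i) (B.succStep v i) ≤ ∑ i, dist (u i) (v i) := by
  have hdrop : ∀ i, ∑ k, dist (u (i.succAbove k)) (v (i.succAbove k)) =
      ∑ j, dist (u j) (v j) - dist (u i) (v i) := fun i => by
    rw [eq_sub_iff_add_eq', ← Fin.sum_univ_succAbove (fun j => dist (u j) (v j)) i]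
  refine le_of_mul_le_mul_left ?_ (Nat.cast_pos.2 hn : (0 : ℝ) < n)
  calc n * ∑ i, dist (B.succStep u i) (B.succStep v i)
      ≤ ∑ i, (∑ j, dist (u j) (v j) - dist (u i) (v i)) := by
        rw [Finset.mul_sum]
        exact Finset.sum_le_sum fun i _ => hdrop i ▸ B.mul_dist_le _ _
    _ = n * ∑ i, dist (u i) (v i) := by simp [Finset.sum_sub_distrib]; ring

lemma isContractingStep_succStep (hn : 2 ≤ n) : IsContractingStep B.succStep (n⁻¹ : ℝ) := by
  have hn' : (2 : ℝ) ≤ n := by exact_mod_cast hn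
  have hpos : (0 : ℝ) < n := by linarith
  exact
    { nonneg := by positivity
      lt_one := inv_lt_one_of_one_lt₀ (by linarith)
      spread_le := fun u => (le_inv_mul_iff₀ hpos).2 (B.mul_spread_succStep_le u)
      dist_map_le := fun u i =>
        (le_mul_of_one_le_left dist_nonneg (by linarith)).trans (B.mul_dist_succStep_self_le u i) }

noncomputable def succ [CompleteSpace X] [Nonempty X] [ContinuousConstSMul G X] (hn : 2 ≤ n) :
    Barycenter X G (n + 1) :=
  ofContractingStep (B.isContractingStep_succStep hn) (B.sum_dist_succStep_le (by omega))
    B.succStep_comp_perm B.succStep_smul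

end Barycenter

theorem Barycenter.nonempty [CompleteSpace X] [Nonempty X] {G : Type*} [SMul G X]
    [ContinuousConstSMul G X] {σ : X → X → ℝ → X} (hσ : IsGeodesicBicombing σ)
    (hconical : IsConical σ)
    (hequiv : ∀ (g : G) (x y : X), ∀ t ∈ Icc (0 : ℝ) 1, g • σ x y t = σ (g • x) (g • y) t) :
    ∀ n, Nonempty (Barycenter X G (n + 1))
  | 0 => ⟨one⟩
  | 1 => ⟨midpoint hσ hconical hequiv⟩
  | n + 2 =>
    have ⟨B⟩ := Barycenter.nonempty hσ hconical hequiv (n + 1)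
    ⟨B.succ (by omega)⟩

lemma Barycenter.smul_apply_orbit {G : Type*} [Group G] [MulAction G X] {n : ℕ}
    (B : Barycenter X G n) (e : G ≃ Fin n) (x : X) (g : G) :
    g • B (fun i => e.symm i • x) = B (fun i => e.symm i • x) := by
  rw [← B.smul]
  convert B.comp_perm (fun i => e.symm i • x) (e.symm.trans ((Equiv.mulLeft g).trans e)) using 2
  funext i
  simp [mul_smul]

/-- **Finite groups acting on spaces with conical equivariant bicombings have fixed
points** (Proposition `fingpfixpt`). -/
theorem finite_group_fixed_point
    {G : Type*} [Group G] [Finite G] [MulAction G X]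
    [CompleteSpace X] [Nonempty X]
    (hiso : ∀ g : G, Isometry (fun x : X => g • x))
    (σ : X → X → ℝ → X) (hσ : IsGeodesicBicombing σ) (hconical : IsConical σ)
    (hequiv : ∀ (g : G) (x y : X), ∀ t ∈ Set.Icc (0 : ℝ) 1,
      g • σ x y t = σ (g • x) (g • y) t) :
    ∃ x : X, ∀ g : G, g • x = x := by
  have : ContinuousConstSMul G X := ⟨fun g => (hiso g).continuous⟩
  obtain ⟨x₀⟩ := ‹Nonempty X›
  obtain ⟨n, ⟨e⟩⟩ := Finite.exists_equiv_fin G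
  obtain ⟨m, rfl⟩ : ∃ m, n = m + 1 := Nat.exists_eq_succ_of_ne_zero fun h => (h ▸ e 1).elim0
  obtain ⟨B⟩ := Barycenter.nonempty hσ hconical hequiv m
  exact ⟨_, B.smul_apply_orbit e x₀⟩
end

section
/- Let (X,d) be a geodesic metric space and let σ be a geodesic bicombing on X that is consistent and conical. Then σ is convex: for all x,y,x',y' ∈ X the function [0,1] → ℝ, t ↦ d(σ_{xy}(t),σ_{x'y'}(t)), is convex. -/
open Metric Set

variable {X : Type*} [MetricSpace X]

/-- A geodesic metric space: every pair of points is joined by a (constant-speed) geodesic. -/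
def IsGeodesicSpace (X : Type*) [MetricSpace X] : Prop :=
  ∀ x y : X, ∃ γ : ℝ → X, γ 0 = x ∧ γ 1 = y ∧
    ∀ s ∈ Set.Icc (0 : ℝ) 1, ∀ t ∈ Set.Icc (0 : ℝ) 1,
      dist (γ s) (γ t) = |s - t| * dist x y

/-- **A consistent and conical geodesic bicombing is convex** (Remark `cccbic`). -/
theorem consistent_conical_implies_convex
    (hgeo : IsGeodesicSpace X)
    (σ : X → X → ℝ → X) (hσ : IsGeodesicBicombing σ)
    (hcons : IsConsistent σ) (hconical : IsConical σ) :
    ∀ x y x' y' : X,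
      ConvexOn ℝ (Set.Icc (0 : ℝ) 1) (fun t => dist (σ x y t) (σ x' y' t)) := by
  intro x y x' y'
  refine ⟨convex_Icc 0 1, ?_⟩
  have key : ∀ p q : ℝ, p ∈ Set.Icc (0:ℝ) 1 → q ∈ Set.Icc (0:ℝ) 1 → p ≤ q →
      ∀ μ ν : ℝ, 0 ≤ μ → 0 ≤ ν → μ + ν = 1 →
      dist (σ x y (μ*p+ν*q)) (σ x' y' (μ*p+ν*q)) ≤
        μ * dist (σ x y p) (σ x' y' p) + ν * dist (σ x y q) (σ x' y' q) := by
    intro p q hp hq hpq μ ν hμ hν hμν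
    have hμ1 : μ = 1 - ν := by linarith
    have hm : μ*p+ν*q = (1 - ν)*p + ν*q := by rw [hμ1]
    have hνIcc : ν ∈ Set.Icc (0:ℝ) 1 := ⟨hν, by linarith⟩
    have h1 : σ x y (μ*p+ν*q) = σ (σ x y p) (σ x y q) ν := by
      rw [hcons x y p q ν hp.1 hpq hq.2 hνIcc, hm]
    have h2 : σ x' y' (μ*p+ν*q) = σ (σ x' y' p) (σ x' y' q) ν := by
      rw [hcons x' y' p q ν hp.1 hpq hq.2 hνIcc, hm]
    rw [h1, h2, hμ1]
    exact hconical _ _ _ _ ν hνIcc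
  intro p hp q hq μ ν hμ hν hμν
  rcases le_total p q with h | h
  · simpa using key p q hp hq h μ ν hμ hν hμν
  · have := key q p hq hp h ν μ hν hμ (by linarith)
    simp only [smul_eq_mul]
    calc dist (σ x y (μ*p+ν*q)) (σ x' y' (μ*p+ν*q))
        = dist (σ x y (ν*q+μ*p)) (σ x' y' (ν*q+μ*p)) := by ring_nf
      _ ≤ _ := by linarith [this]
end

section
/- Let σ be a ccc geodesic bicombing on a complete metric space (X,d), and let ζ,η be σ-rays. Then the function D : [0,∞) → ℝ, D(t) := d(ζ(t),η(t)), is convex. In particular, if ζ and η are asymptotic, then D is non-increasing. -/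
open Metric Set

variable {X : Type*} [MetricSpace X]

lemma ray_seg {σ : X → X → ℝ → X} (hg : IsGeodesicBicombing σ) (hc : IsConsistent σ)
    {ζ : ℝ → X} (hζ : IsRay σ ζ)
    {x y l : ℝ} (hx : 0 ≤ x) (hxy : x ≤ y) (hl : l ∈ Set.Icc (0:ℝ) 1) :
    σ (ζ x) (ζ y) l = ζ ((1 - l) * x + l * y) := by
  obtain ⟨_, h0, h1, hd⟩ := hg
  obtain ⟨-, -, hray⟩ := hζ
  rcases eq_or_lt_of_le (hx.trans hxy) with hy | hy
  · have hx0 : x = 0 := le_antisymm (by linarith [hy.symm ▸ hxy]) hx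
    have hy0 : y = 0 := hy.symm
    subst hx0; subst hy0
    have hz : dist (σ (ζ 0) (ζ 0) l) (σ (ζ 0) (ζ 0) 0) = 0 := by
      rw [hd _ _ l hl 0 ⟨le_refl 0, zero_le_one⟩]; simp
    rw [dist_eq_zero.mp hz, h0]
    norm_num
  · have hxy' : x / y ∈ Set.Icc (0:ℝ) 1 := ⟨div_nonneg hx hy.le, (div_le_one hy).mpr hxy⟩
    have e1 : σ (ζ 0) (ζ y) (x / y) = ζ x := by
      rw [hray y hy.le (x/y) hxy', div_mul_cancel₀ _ hy.ne']
    have e2 : σ (ζ 0) (ζ y) 1 = ζ y := h1 _ _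
    have hcons := hc (ζ 0) (ζ y) (x/y) 1 l hxy'.1 hxy'.2 le_rfl hl
    rw [e1, e2] at hcons
    rw [hcons]
    have hu : (1 - l) * (x/y) + l * 1 ∈ Set.Icc (0:ℝ) 1 := by
      constructor
      · have := mul_nonneg (by linarith [hl.2] : (0:ℝ) ≤ 1 - l) hxy'.1
        linarith [hl.1]
      · nlinarith [hl.1, hl.2, hxy'.1, hxy'.2]
    rw [hray y hy.le _ hu]
    congr 1
    field_simp

/-- **Convexity of the distance between two σ-rays** (Proposition `asymptotic (i)`):
`t ↦ d(ζ(t),η(t))` is convex on `[0,∞)`; in particular if `ζ,η` are asymptotic then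
this function is non-increasing. -/
theorem ray_distance_convex [CompleteSpace X]
    (σ : X → X → ℝ → X) (hσ : IsCCC σ)
    (ζ η : ℝ → X) (hζ : IsRay σ ζ) (hη : IsRay σ η) :
    ConvexOn ℝ (Set.Ici (0 : ℝ)) (fun t => dist (ζ t) (η t)) ∧
    (Asymptotic ζ η → AntitoneOn (fun t => dist (ζ t) (η t)) (Set.Ici (0 : ℝ))) := by
  obtain ⟨hg, hc, hcon⟩ := hσ
  have hconv : ConvexOn ℝ (Set.Ici (0 : ℝ)) (fun t => dist (ζ t) (η t)) := by
    refine ⟨convex_Ici 0, ?_⟩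
    intro x hx y hy a b ha hb hab
    simp only [smul_eq_mul, mem_Ici] at *
    rcases le_total x y with h | h
    · have hbI : b ∈ Set.Icc (0:ℝ) 1 := ⟨hb, by linarith⟩
      have e1 := ray_seg hg hc hζ hx h hbI
      have e2 := ray_seg hg hc hη hx h hbI
      have key := hcon (ζ x) (ζ y) (η x) (η y) b hbI
      rw [e1, e2] at key
      have hax : a = 1 - b := by linarith
      calc dist (ζ (a * x + b * y)) (η (a * x + b * y))
          = dist (ζ ((1-b) * x + b * y)) (η ((1-b) * x + b * y)) := by rw [hax]
        _ ≤ (1 - b) * dist (ζ x) (η x) + b * dist (ζ y) (η y) := key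
        _ = a * dist (ζ x) (η x) + b * dist (ζ y) (η y) := by rw [hax]
    · have haI : a ∈ Set.Icc (0:ℝ) 1 := ⟨ha, by linarith⟩
      have e1 := ray_seg hg hc hζ hy h haI
      have e2 := ray_seg hg hc hη hy h haI
      have key := hcon (ζ y) (ζ x) (η y) (η x) a haI
      rw [e1, e2] at key
      have hbx : b = 1 - a := by linarith
      calc dist (ζ (a * x + b * y)) (η (a * x + b * y))
          = dist (ζ ((1-a) * y + a * x)) (η ((1-a) * y + a * x)) := by
            rw [hbx]; ring_nf
        _ ≤ (1 - a) * dist (ζ y) (η y) + a * dist (ζ x) (η x) := key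
        _ = a * dist (ζ x) (η x) + b * dist (ζ y) (η y) := by rw [hbx]; ring
  refine ⟨hconv, ?_⟩
  rintro ⟨M, hM⟩ a ha b hb hab
  simp only [mem_Ici] at ha hb
  by_contra hlt
  push_neg at hlt
  set fa := dist (ζ a) (η a) with hfa
  set fb := dist (ζ b) (η b) with hfb
  have hδ : 0 < fb - fa := by simpa using sub_pos.mpr hlt
  have hK : fb ≤ M := hM b hb
  have hK1 : 0 < M - fa + 1 := by linarith
  set l : ℝ := (fb - fa) / (M - fa + 1) with hl
  have hl0 : 0 < l := div_pos hδ hK1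
  have hl1 : l ≤ 1 := by
    rw [hl, div_le_one hK1]; linarith
  have hcab : a < b := lt_of_le_of_ne hab (by rintro rfl; exact absurd rfl (ne_of_lt hlt) )
  set t : ℝ := a + (b - a) / l with ht
  have hta : 0 < (b - a) / l := div_pos (by linarith) hl0
  have htI : t ∈ Set.Ici (0:ℝ) := by simp only [mem_Ici, ht]; linarith
  have ht0 : (0:ℝ) ≤ t := htI
  have hcomb := hconv.2 (mem_Ici.mpr ha) htI (by linarith : (0:ℝ) ≤ 1 - l) hl0.le
    (by ring : (1 - l) + l = 1)
  simp only [smul_eq_mul] at hcomb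
  have harg : (1 - l) * a + l * t = b := by
    rw [ht]
    field_simp
    ring
  rw [harg] at hcomb
  have hft : dist (ζ t) (η t) ≤ M := hM t ht0
  have hlM : fb ≤ (1 - l) * fa + l * M := by
    refine hcomb.trans ?_
    have : l * dist (ζ t) (η t) ≤ l * M := mul_le_mul_of_nonneg_left hft hl0.le
    linarith
  -- fb - fa ≤ l * (M - fa) = (fb-fa)*(M-fa)/(M-fa+1) < fb - fa
  have : fb - fa ≤ l * (M - fa) := by nlinarith
  rw [hl, div_mul_eq_mul_div] at this
  have h2 := (le_div_iff₀ hK1).mp this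
  nlinarith [h2, hδ]
end

section
/- Let σ be a ccc geodesic bicombing on a complete metric space (X,d), let ζ be a σ-ray, and let Ξ be a set of σ-rays all emanating from one common point, such that every sequence of elements of Ξ has a subsequence converging pointwise on [0,∞) to an element of Ξ. If there exists D ≥ 0 such that for every r > 0 there exist t ≥ r and ξ ∈ Ξ with inf_{s≥0} d(ζ(t),ξ(s)) ≤ D, then ζ is asymptotic to some element of Ξ. -/
open Metric Set

variable {X : Type*} [MetricSpace X]

/-- **A ray coming back close to a compact family of rays is asymptotic to one of them**
(Proposition `asymptotic (ii)`). -/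
theorem asymptotic_to_element_of_compact_family [CompleteSpace X]
    (σ : X → X → ℝ → X) (hσ : IsCCC σ)
    (ζ : ℝ → X) (hζ : IsRay σ ζ)
    (Ξ : Set (ℝ → X)) (hΞray : ∀ ξ ∈ Ξ, IsRay σ ξ)
    (p : X) (hΞbase : ∀ ξ ∈ Ξ, ξ 0 = p)
    (hΞcompact : ∀ f : ℕ → (ℝ → X), (∀ k : ℕ, f k ∈ Ξ) →
      ∃ (φ : ℕ → ℕ) (ξ : ℝ → X), StrictMono φ ∧ ξ ∈ Ξ ∧
        ∀ t : ℝ, 0 ≤ t →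
          Filter.Tendsto (fun k : ℕ => f (φ k) t) Filter.atTop (nhds (ξ t)))
    (hD : ∃ D : ℝ, 0 ≤ D ∧ ∀ r : ℝ, 0 < r → ∃ t : ℝ, r ≤ t ∧ ∃ ξ ∈ Ξ,
      (⨅ s : Set.Ici (0 : ℝ), dist (ζ t) (ξ ↑s)) ≤ D) :
    ∃ ξ ∈ Ξ, Asymptotic ζ ξ := by
  obtain ⟨D, hD0, hDr⟩ := hD
  haveI : Nonempty (Set.Ici (0:ℝ)) := ⟨⟨0, Set.mem_Ici.2 le_rfl⟩⟩
  -- choose times and rays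
  have H : ∀ n : ℕ, ∃ t, ∃ ξ, ∃ s, ((n:ℝ)+1) ≤ t ∧ ξ ∈ Ξ ∧ 0 ≤ s ∧
      dist (ζ t) (ξ s) ≤ D + 1 := by
    intro n
    obtain ⟨t, ht, ξ, hξ, hinf⟩ := hDr ((n:ℝ)+1) (by positivity)
    have hlt : (⨅ s : Set.Ici (0:ℝ), dist (ζ t) (ξ ↑s)) < D + 1 :=
      lt_of_le_of_lt hinf (by linarith)
    obtain ⟨⟨s, hs⟩, hds⟩ := exists_lt_of_ciInf_lt hlt
    exact ⟨t, ξ, s, ht, hξ, hs, le_of_lt hds⟩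
  choose tf ξf sf htf hξf hsf hdf using H
  set C : ℝ := dist (ζ 0) p + (D + 1) with hC
  have hC0 : 0 ≤ C := by positivity
  have htpos : ∀ n : ℕ, 0 < tf n := fun n => lt_of_lt_of_le (by positivity) (htf n)
  have hζd : ∀ t : ℝ, 0 ≤ t → dist (ζ 0) (ζ t) = t := by
    intro t ht
    rw [hζ.2.1 0 t le_rfl ht]
    rw [abs_of_nonpos (by linarith)]; ring
  have hξd : ∀ n : ℕ, dist p (ξf n (sf n)) = sf n := by
    intro n
    rw [← hΞbase (ξf n) (hξf n), (hΞray (ξf n) (hξf n)).2.1 0 (sf n) le_rfl (hsf n)]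
    rw [abs_of_nonpos (by linarith [hsf n])]; ring
  -- |sf n - tf n| ≤ C
  have hst : ∀ n : ℕ, |sf n - tf n| ≤ C := by
    intro n
    rw [abs_sub_le_iff]
    constructor
    · have h1 : sf n = dist p (ξf n (sf n)) := (hξd n).symm
      have h2 : dist p (ξf n (sf n)) ≤ dist p (ζ 0) + dist (ζ 0) (ζ (tf n))
          + dist (ζ (tf n)) (ξf n (sf n)) := dist_triangle4 _ _ _ _
      rw [hζd (tf n) (le_of_lt (htpos n))] at h2
      have := hdf n
      rw [dist_comm p (ζ 0)] at h2
      linarith [h1 ▸ h2]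
    · have h1 : tf n = dist (ζ 0) (ζ (tf n)) := (hζd (tf n) (le_of_lt (htpos n))).symm
      have h2 : dist (ζ 0) (ζ (tf n)) ≤ dist (ζ 0) p + dist p (ξf n (sf n))
          + dist (ξf n (sf n)) (ζ (tf n)) := dist_triangle4 _ _ _ _
      rw [hξd n, dist_comm (ξf n (sf n)) (ζ (tf n))] at h2
      linarith [hdf n, h1 ▸ h2]
  -- key bound
  have key : ∀ t : ℝ, 0 ≤ t → ∀ n : ℕ, t ≤ tf n →
      dist (ζ t) (ξf n t) ≤ C + t * C / tf n := by
    intro t ht n htn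
    set l : ℝ := t / tf n with hl
    have hl0 : 0 ≤ l := div_nonneg ht (le_of_lt (htpos n))
    have hl1 : l ≤ 1 := (div_le_one (htpos n)).2 htn
    have hlt : l * tf n = t := div_mul_cancel₀ t (ne_of_gt (htpos n))
    have hζl : σ (ζ 0) (ζ (tf n)) l = ζ t := by
      rw [hζ.2.2 (tf n) (le_of_lt (htpos n)) l ⟨hl0, hl1⟩, hlt]
    have hξl : σ p (ξf n (sf n)) l = ξf n (l * sf n) := by
      rw [← hΞbase (ξf n) (hξf n)]
      exact (hΞray (ξf n) (hξf n)).2.2 (sf n) (hsf n) l ⟨hl0, hl1⟩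
    have h1 : dist (ζ t) (ξf n (l * sf n)) ≤ C := by
      rw [← hζl, ← hξl]
      have := hσ.2.2 (ζ 0) (ζ (tf n)) p (ξf n (sf n)) l ⟨hl0, hl1⟩
      have hb1 : (1 - l) * dist (ζ 0) p ≤ dist (ζ 0) p := by
        nlinarith [dist_nonneg (x := ζ 0) (y := p)]
      have hb2 : l * dist (ζ (tf n)) (ξf n (sf n)) ≤ D + 1 := by
        nlinarith [hdf n, dist_nonneg (x := ζ (tf n)) (y := ξf n (sf n))]
      linarith
    have h2 : dist (ξf n (l * sf n)) (ξf n t) ≤ t * C / tf n := by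
      rw [(hΞray (ξf n) (hξf n)).2.1 (l * sf n) t (mul_nonneg hl0 (hsf n)) ht]
      have heq : l * sf n - t = l * (sf n - tf n) := by rw [← hlt]; ring
      rw [heq, abs_mul, abs_of_nonneg hl0]
      calc l * |sf n - tf n| ≤ l * C := mul_le_mul_of_nonneg_left (hst n) hl0
        _ = t * C / tf n := by rw [hl]; ring
    calc dist (ζ t) (ξf n t) ≤ dist (ζ t) (ξf n (l * sf n)) + dist (ξf n (l * sf n)) (ξf n t) :=
          dist_triangle _ _ _
      _ ≤ C + t * C / tf n := add_le_add h1 h2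
  -- compactness
  obtain ⟨φ, ξ, hφ, hξΞ, hconv⟩ := hΞcompact ξf hξf
  refine ⟨ξ, hξΞ, C, fun t ht => ?_⟩
  have hlim1 : Filter.Tendsto (fun k : ℕ => dist (ζ t) (ξf (φ k) t)) Filter.atTop
      (nhds (dist (ζ t) (ξ t))) := Filter.Tendsto.dist tendsto_const_nhds (hconv t ht)
  have hlim2 : Filter.Tendsto (fun k : ℕ => C + t * C * (1 / ((k:ℝ) + 1))) Filter.atTop
      (nhds C) := by
    have := (tendsto_one_div_add_atTop_nhds_zero_nat).const_mul (t * C)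
    simpa using Filter.Tendsto.add (tendsto_const_nhds (x := C)) this
  refine le_of_tendsto_of_tendsto hlim1 hlim2 ?_
  filter_upwards [Filter.eventually_ge_atTop ⌈t⌉₊] with k hk
  have hk1 : t ≤ (k:ℝ) + 1 := le_trans (Nat.le_ceil t) (by exact_mod_cast by linarith [hk])
  have hφk : (k:ℝ) + 1 ≤ tf (φ k) := by
    have : (k:ℝ) ≤ (φ k : ℝ) := by exact_mod_cast hφ.le_apply
    linarith [htf (φ k)]
  have htk : t ≤ tf (φ k) := le_trans hk1 hφk
  have hdiv : t * C / tf (φ k) ≤ t * C * (1 / ((k:ℝ) + 1)) := by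
    rw [mul_one_div]
    apply div_le_div_of_nonneg_left (by positivity) (by positivity) hφk
  exact le_trans (key t ht (φ k) htk) (by linarith)
end

section
/- Let σ be a ccc geodesic bicombing on a complete metric space (X,d), and let ζ,η be σ-rays. Then ζ and η are asymptotic if and only if there exists D ≥ 0 such that for every r > 0 there exists t ≥ r with inf_{s≥0} d(ζ(t),η(s)) ≤ D. -/
open Metric Set

variable {X : Type*} [MetricSpace X]

/-! If `ζ t` is close to `η s`, then conicality applied to the `σ`-geodesics from the base points
to `ζ t` and `η s`, at parameter `u / t`, puts `ζ u` close to `η (u s / t)`, which lies within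
`(u / t) |s - t|` of `η u`. This gives
`d(ζ u, η u) ≤ d(ζ 0, η 0) + 2 (u / t) d(ζ t, η s)`, and letting `t → ∞` along the times where `ζ`
comes back within `D` of `η` yields `d(ζ u, η u) ≤ d(ζ 0, η 0)` for all `u ≥ 0`. -/

namespace IsRay

variable {σ : X → X → ℝ → X} {ξ ζ η : ℝ → X}

theorem dist_zero_apply (hξ : IsRay σ ξ) {t : ℝ} (ht : 0 ≤ t) : dist (ξ 0) (ξ t) = t := by
  rw [hξ.2.1 0 t le_rfl ht, zero_sub, abs_neg, abs_of_nonneg ht]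

theorem abs_sub_le_dist (hζ : IsRay σ ζ) (hη : IsRay σ η) {s t : ℝ} (hs : 0 ≤ s)
    (ht : 0 ≤ t) : |s - t| ≤ dist (ζ 0) (η 0) + dist (ζ t) (η s) := by
  have h₁ := dist_triangle4 (η 0) (ζ 0) (ζ t) (η s)
  have h₂ := dist_triangle4 (ζ 0) (η 0) (η s) (ζ t)
  rw [hζ.dist_zero_apply ht, hη.dist_zero_apply hs] at h₁ h₂
  rw [dist_comm (η 0)] at h₁
  rw [dist_comm (η s)] at h₂
  rw [abs_sub_le_iff]
  constructor <;> linarith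

theorem dist_le_of_isConical (hσ : IsConical σ) (hζ : IsRay σ ζ) (hη : IsRay σ η)
    {s t u : ℝ} (hs : 0 ≤ s) (ht : 0 < t) (hu : 0 ≤ u) (hut : u ≤ t) :
    dist (ζ u) (η u) ≤ dist (ζ 0) (η 0) + 2 * (u / t) * dist (ζ t) (η s) := by
  set l := u / t
  have hl : l ∈ Icc (0 : ℝ) 1 := ⟨div_nonneg hu ht.le, (div_le_one ht).mpr hut⟩
  have hlt : l * t = u := div_mul_cancel₀ u ht.ne'
  have hcone : dist (ζ u) (η (l * s)) ≤ (1 - l) * dist (ζ 0) (η 0) + l * dist (ζ t) (η s) := by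
    have := hσ (ζ 0) (ζ t) (η 0) (η s) l hl
    rwa [hζ.2.2 t ht.le l hl, hη.2.2 s hs l hl, hlt] at this
  have hη_shift : dist (η (l * s)) (η u) = l * |s - t| := by
    rw [hη.2.1 _ _ (mul_nonneg hl.1 hs) hu, ← hlt, ← mul_sub, abs_mul, abs_of_nonneg hl.1]
  have hgap := mul_le_mul_of_nonneg_left (hζ.abs_sub_le_dist hη hs ht.le) hl.1
  calc dist (ζ u) (η u) ≤ dist (ζ u) (η (l * s)) + dist (η (l * s)) (η u) := dist_triangle _ _ _
    _ ≤ dist (ζ 0) (η 0) + 2 * l * dist (ζ t) (η s) := by nlinarith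

theorem dist_le_dist_zero_of_frequently_close (hσ : IsConical σ) (hζ : IsRay σ ζ)
    (hη : IsRay σ η) {D : ℝ} (hD : ∀ r > 0, ∃ t ≥ r, ∃ s ≥ 0, dist (ζ t) (η s) ≤ D)
    {u : ℝ} (hu : 0 ≤ u) : dist (ζ u) (η u) ≤ dist (ζ 0) (η 0) := by
  refine le_of_forall_pos_le_add fun ε hε => ?_
  obtain ⟨t, ht, s, hs, hts⟩ := hD (max 1 (max u (2 * u * D / ε))) (by positivity)
  simp only [ge_iff_le, max_le_iff] at ht
  obtain ⟨ht₁, hut, htD⟩ := ht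
  have ht₀ : 0 < t := by linarith
  have hsmall : 2 * (u / t) * D ≤ ε := by
    rw [div_le_iff₀ hε] at htD
    rw [mul_div_assoc', div_mul_eq_mul_div, div_le_iff₀ ht₀]
    linarith
  calc dist (ζ u) (η u) ≤ dist (ζ 0) (η 0) + 2 * (u / t) * dist (ζ t) (η s) :=
        dist_le_of_isConical hσ hζ hη hs ht₀ hu hut
    _ ≤ dist (ζ 0) (η 0) + 2 * (u / t) * D := by gcongr
    _ ≤ dist (ζ 0) (η 0) + ε := by linarith

end IsRay

theorem asymptotic_iff_comes_back_close_general
    (σ : X → X → ℝ → X) (hσ : IsCCC σ)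
    (ζ η : ℝ → X) (hζ : IsRay σ ζ) (hη : IsRay σ η) :
    Asymptotic ζ η ↔
      ∃ D : ℝ, 0 ≤ D ∧ ∀ r : ℝ, 0 < r → ∃ t : ℝ, r ≤ t ∧
        (⨅ s : Set.Ici (0 : ℝ), dist (ζ t) (η ↑s)) ≤ D := by
  constructor
  · rintro ⟨M, hM⟩
    refine ⟨max M 0, le_max_right _ _, fun r hr => ⟨r, le_rfl, ?_⟩⟩
    have hbdd : BddBelow (range fun s : Ici (0 : ℝ) => dist (ζ r) (η s)) :=
      ⟨0, forall_mem_range.2 fun _ => dist_nonneg⟩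
    calc (⨅ s : Set.Ici (0 : ℝ), dist (ζ r) (η s))
        ≤ dist (ζ r) (η r) := ciInf_le hbdd ⟨r, hr.le⟩
      _ ≤ max M 0 := (hM r hr.le).trans (le_max_left _ _)
  · rintro ⟨D, -, hD⟩
    have hclose : ∀ r > 0, ∃ t ≥ r, ∃ s ≥ 0, dist (ζ t) (η s) ≤ D + 1 := by
      intro r hr
      obtain ⟨t, hrt, hinf⟩ := hD r hr
      obtain ⟨⟨s, hs⟩, hts⟩ := exists_lt_of_ciInf_lt (hinf.trans_lt (lt_add_one D))
      exact ⟨t, hrt, s, hs, hts.le⟩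
    exact ⟨dist (ζ 0) (η 0), fun u hu =>
      IsRay.dist_le_dist_zero_of_frequently_close hσ.2.2 hζ hη hclose hu⟩

/-- **Characterisation of asymptotic rays** (Proposition `asymptotic (iii)`): two σ-rays
are asymptotic iff one of them comes back within a universally bounded distance of the
image of the other at arbitrarily large times. -/
theorem asymptotic_iff_comes_back_close [CompleteSpace X]
    (σ : X → X → ℝ → X) (hσ : IsCCC σ)
    (ζ η : ℝ → X) (hζ : IsRay σ ζ) (hη : IsRay σ η) :
    Asymptotic ζ η ↔
      ∃ D : ℝ, 0 ≤ D ∧ ∀ r : ℝ, 0 < r → ∃ t : ℝ, r ≤ t ∧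
        (⨅ s : Set.Ici (0 : ℝ), dist (ζ t) (η ↑s)) ≤ D :=
  asymptotic_iff_comes_back_close_general σ hσ ζ η hζ hη
end

section
/- Let (X,d) be a metric space with a ccc geodesic bicombing σ, let o,x,y ∈ X with x ≠ o, and let r > 0 be such that max(d(o,x),d(o,y)) ≥ r. Then d(ρ_o^x(r), ρ_o^y(r)) ≤ 2·d(x,y)·r/d(o,x). -/
open Metric Set

variable {X : Type*} [MetricSpace X]

open Classical in
/-- `ρ_o^x(r)`: the point at parameter `r` on the σ-geodesic from `o` to `x`
(reparametrized by arclength, stopping at `x`). -/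
noncomputable def rho (σ : X → X → ℝ → X) (o x : X) (r : ℝ) : X :=
  if x = o then o else σ o x (min (r / dist o x) 1)

/-- **The key projection estimate** (Proposition `neweq52`):
`d(ρ_o^x(r), ρ_o^y(r)) ≤ 2·d(x,y)·r / d(o,x)` whenever `max(d(o,x),d(o,y)) ≥ r`. -/
theorem rho_projection_estimate
    (σ : X → X → ℝ → X) (hσ : IsCCC σ)
    (o x y : X) (hx : x ≠ o) (r : ℝ) (hr : 0 < r)
    (hmax : r ≤ max (dist o x) (dist o y)) :
    dist (rho σ o x r) (rho σ o y r) ≤ 2 * dist x y * r / dist o x := by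
  obtain ⟨⟨_, h0, h1, hgeo⟩, _, hcon⟩ := hσ
  have ha : 0 < dist o x := dist_pos.mpr (fun h => hx h.symm)
  have hd : (0:ℝ) ≤ dist x y := dist_nonneg
  by_cases hy : y = o
  · have hdy0 : dist o y = 0 := by rw [hy, dist_self]
    have hra : r ≤ dist o x := by
      rcases le_max_iff.mp hmax with h | h
      · exact h
      · linarith
    have hu0 : (0:ℝ) ≤ r / dist o x := div_nonneg hr.le ha.le
    have hu1 : r / dist o x ≤ 1 := (div_le_one ha).mpr hra
    have hq : r / dist o x * dist o x = r := div_mul_cancel₀ r ha.ne'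
    rw [rho, rho, if_pos hy, if_neg hx, min_eq_left hu1]
    have hdy : dist x y = dist o x := by rw [hy, dist_comm]
    have hds : dist (σ o x (r / dist o x)) (σ o x 0) = |r / dist o x - 0| * dist o x :=
      hgeo o x _ ⟨hu0, hu1⟩ 0 ⟨le_refl _, zero_le_one⟩
    rw [h0, sub_zero, abs_of_nonneg hu0, hq] at hds
    rw [hds, hdy, mul_div_assoc, mul_assoc]
    nlinarith [mul_nonneg ha.le (mul_nonneg hr.le hu0)]
  · have hb : 0 < dist o y := dist_pos.mpr (fun h => hy h.symm)
    have habd : |dist o x - dist o y| ≤ dist x y := by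
      have h' := abs_dist_sub_le x y o
      rwa [dist_comm x o, dist_comm y o] at h'
    rw [rho, rho, if_neg hx, if_neg hy]
    by_cases hrx : r ≤ dist o x
    · set u := r / dist o x with hu_def
      have hu0 : (0:ℝ) ≤ u := div_nonneg hr.le ha.le
      have hu1 : u ≤ 1 := (div_le_one ha).mpr hrx
      have hqu : u * dist o x = r := div_mul_cancel₀ r ha.ne'
      rw [min_eq_left hu1]
      have key1 : dist (σ o x u) (σ o y u) ≤ u * dist x y := by
        have h' := hcon o x o y u ⟨hu0, hu1⟩
        simpa [dist_self] using h'
      by_cases hry : r ≤ dist o y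
      · set v := r / dist o y with hv_def
        have hv0 : (0:ℝ) ≤ v := div_nonneg hr.le hb.le
        have hv1 : v ≤ 1 := (div_le_one hb).mpr hry
        have hqv : v * dist o y = r := div_mul_cancel₀ r hb.ne'
        rw [min_eq_left hv1]
        have key2 : dist (σ o y u) (σ o y v) = |u - v| * dist o y :=
          hgeo o y _ ⟨hu0, hu1⟩ _ ⟨hv0, hv1⟩
        have e1 : |u - v| * dist o y = |u * dist o y - r| := by
          rw [← abs_of_pos hb, ← abs_mul, sub_mul, hqv, abs_of_pos hb]
        have e2 : |u * dist o y - r| = u * |dist o y - dist o x| := by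
          rw [← hqu, ← mul_sub, abs_mul, abs_of_nonneg hu0]
        have e3 : u * |dist o y - dist o x| ≤ u * dist x y := by
          apply mul_le_mul_of_nonneg_left _ hu0
          rwa [abs_sub_comm]
        have tri := dist_triangle (σ o x u) (σ o y u) (σ o y v)
        rw [key2, e1, e2] at tri
        calc dist (σ o x u) (σ o y v) ≤ u * dist x y + u * dist x y := by linarith
          _ = 2 * dist x y * (r / dist o x) := by rw [← hu_def]; ring
          _ = 2 * dist x y * r / dist o x := by rw [mul_div_assoc]
      · push_neg at hry
        have h1le : (1:ℝ) ≤ r / dist o y := (one_le_div hb).mpr hry.le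
        rw [min_eq_right h1le, h1]
        have key2 : dist (σ o y u) (σ o y 1) = |u - 1| * dist o y :=
          hgeo o y _ ⟨hu0, hu1⟩ 1 ⟨zero_le_one, le_refl 1⟩
        rw [h1, abs_of_nonpos (by linarith : u - 1 ≤ 0)] at key2
        have h2 : dist o x - dist o y ≤ dist x y := (le_abs_self _).trans habd
        have h3 : u * (dist o x - dist o y - dist x y) ≤ 0 :=
          mul_nonpos_of_nonneg_of_nonpos hu0 (by linarith)
        have tri := dist_triangle (σ o x u) (σ o y u) y
        rw [key2] at tri
        calc dist (σ o x u) y ≤ u * dist x y + u * dist x y := by nlinarith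
          _ = 2 * dist x y * (r / dist o x) := by rw [← hu_def]; ring
          _ = 2 * dist x y * r / dist o x := by rw [mul_div_assoc]
    · push_neg at hrx
      have hry : r ≤ dist o y := by
        rcases le_max_iff.mp hmax with h | h
        · linarith
        · exact h
      set v := r / dist o y with hv_def
      have hv0 : (0:ℝ) ≤ v := div_nonneg hr.le hb.le
      have hv1 : v ≤ 1 := (div_le_one hb).mpr hry
      have hqv : v * dist o y = r := div_mul_cancel₀ r hb.ne'
      have h1le : (1:ℝ) ≤ r / dist o x := (one_le_div ha).mpr hrx.le
      rw [min_eq_right h1le, min_eq_left hv1, h1]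
      have key2 : dist (σ o y 1) (σ o y v) = |1 - v| * dist o y :=
        hgeo o y 1 ⟨zero_le_one, le_refl 1⟩ _ ⟨hv0, hv1⟩
      rw [h1, abs_of_nonneg (by linarith : (0:ℝ) ≤ 1 - v), sub_mul, one_mul, hqv] at key2
      have h2 : dist o y - dist o x ≤ dist x y := by
        have := neg_le_of_abs_le habd; linarith
      have tri := dist_triangle x y (σ o y v)
      rw [key2] at tri
      have hfin : 2 * dist x y ≤ 2 * dist x y * (r / dist o x) := by
        nlinarith [mul_nonneg hd (by linarith : (0:ℝ) ≤ r / dist o x - 1)]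
      calc dist x (σ o y v) ≤ 2 * dist x y := by linarith
        _ ≤ 2 * dist x y * (r / dist o x) := hfin
        _ = 2 * dist x y * r / dist o x := by rw [mul_div_assoc]
end

section
/- Let X be a metric space with a ccc geodesic bicombing σ, and let c : [0,1] → X be a constant-speed geodesic, i.e. d(c(s),c(t)) = |s−t|·d(c(0),c(1)) for all s,t ∈ [0,1]. Suppose c is locally a σ-geodesic: there exists an open cover 𝒰 of [0,1] such that for every U ∈ 𝒰 and all s,t ∈ U with s ≤ t, the image of σ_{c(s)c(t)} equals c([s,t]). Then c is the σ-geodesic from c(0) to c(1), i.e. c(t) = σ(c(0),c(1),t) for all t ∈ [0,1]. -/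
open Metric Set

variable {X : Type*} [MetricSpace X]

/-!
Let `f t = d(c t, σ (c 0) (c 1) t)`; it is continuous and vanishes at `0` and `1`. Around an
interior time `t`, the restriction of `c` to a small interval `[t - δ, t + δ]` is a σ-geodesic,
so `c t` is the σ-midpoint of `c (t - δ)` and `c (t + δ)`; by consistency `σ (c 0) (c 1) t` is
the σ-midpoint of `σ (c 0) (c 1) (t ± δ)`, and conicality gives `2 f t ≤ f (t - δ) + f (t + δ)`.
At the leftmost maximum of `f` this sub-mean inequality is impossible unless the maximum is `0`.
-/

open Filter Topology

theorem nonpos_of_eventually_two_mul_le_add {f : ℝ → ℝ} {a b : ℝ} (hf : ContinuousOn f (Icc a b))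
    (ha : f a ≤ 0) (hb : f b ≤ 0)
    (hmid : ∀ t ∈ Ioo a b, ∀ᶠ δ in 𝓝[>] 0, 2 * f t ≤ f (t - δ) + f (t + δ)) :
    ∀ t ∈ Icc a b, f t ≤ 0 := by
  intro t ht
  obtain ⟨t₀, ht₀, hmax⟩ := isCompact_Icc.exists_isMaxOn ⟨t, ht⟩ hf
  by_contra! hpos
  have hM : 0 < f t₀ := hpos.trans_le (hmax ht)
  have hA : IsCompact (Icc a b ∩ f ⁻¹' {f t₀}) :=
    isCompact_Icc.of_isClosed_subset
      (hf.preimage_isClosed_of_isClosed isClosed_Icc isClosed_singleton) inter_subset_left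
  obtain ⟨t₁, ⟨ht₁, hft₁ : f t₁ = f t₀⟩, hleast⟩ := hA.exists_isLeast ⟨t₀, ht₀, rfl⟩
  have ha₁ : a < t₁ := ht₁.1.lt_of_ne (by rintro rfl; linarith)
  have hb₁ : t₁ < b := ht₁.2.lt_of_ne (by rintro rfl; linarith)
  obtain ⟨δ, hδ, hδ_pos, hδ_lt⟩ := ((hmid t₁ ⟨ha₁, hb₁⟩).and
    (Ioo_mem_nhdsGT (lt_min (sub_pos.2 ha₁) (sub_pos.2 hb₁)))).exists
  have hleft : t₁ - δ ∈ Icc a b := ⟨by linarith [min_le_left (t₁ - a) (b - t₁)], by linarith⟩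
  have hright : t₁ + δ ∈ Icc a b := ⟨by linarith, by linarith [min_le_right (t₁ - a) (b - t₁)]⟩
  have hleft_le : f (t₁ - δ) ≤ f t₀ := hmax hleft
  have hright_le : f (t₁ + δ) ≤ f t₀ := hmax hright
  have hleft_max : f (t₁ - δ) = f t₀ := by linarith
  linarith [hleast ⟨hleft, hleft_max⟩]

theorem continuousOn_of_dist_eq_abs_sub_mul {g : ℝ → X} {S : Set ℝ} {L : ℝ}
    (hg : ∀ s ∈ S, ∀ t ∈ S, dist (g s) (g t) = |s - t| * L) : ContinuousOn g S := by
  refine (LipschitzOnWith.of_dist_le_mul (K := ‖L‖₊) fun s hs t ht => ?_).continuousOn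
  rw [hg s hs t ht, coe_nnnorm, Real.norm_eq_abs, Real.dist_eq, mul_comm]
  exact mul_le_mul_of_nonneg_right (le_abs_self L) (abs_nonneg _)

variable {σ : X → X → ℝ → X}

theorem IsGeodesicBicombing.eq_apply_of_mem_image (hσ : IsGeodesicBicombing σ) {x y z : X}
    {l : ℝ} (hl : l ∈ Icc (0 : ℝ) 1) (hz : z ∈ σ x y '' Icc 0 1)
    (hdist : dist x z = l * dist x y) : z = σ x y l := by
  obtain ⟨m, hm, rfl⟩ := hz
  have hm_dist : dist x (σ x y m) = m * dist x y := by
    have := hσ.2.2.2 x y 0 ⟨le_rfl, zero_le_one⟩ m hm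
    rwa [hσ.2.1, zero_sub, abs_neg, abs_of_nonneg hm.1] at this
  have hzero : |(m - l) * dist x y| = 0 := by rw [sub_mul, ← hm_dist, hdist, sub_self, abs_zero]
  rw [← dist_eq_zero, hσ.2.2.2 x y m hm l hl]
  rwa [abs_mul, abs_of_nonneg dist_nonneg] at hzero

theorem IsGeodesicBicombing.midpoint_eq_apply_half (hσ : IsGeodesicBicombing σ) {c : ℝ → X}
    {L s t : ℝ} (hc : ∀ u ∈ Icc s t, ∀ v ∈ Icc s t, dist (c u) (c v) = |u - v| * L)
    (hst : s ≤ t) (himg : σ (c s) (c t) '' Icc 0 1 = c '' Icc s t) :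
    c ((s + t) / 2) = σ (c s) (c t) (1 / 2) := by
  have hs : s ∈ Icc s t := ⟨le_rfl, hst⟩
  have ht : t ∈ Icc s t := ⟨hst, le_rfl⟩
  have hmid : (s + t) / 2 ∈ Icc s t := ⟨by linarith, by linarith⟩
  refine hσ.eq_apply_of_mem_image ⟨by norm_num, by norm_num⟩ (himg ▸ ⟨_, hmid, rfl⟩) ?_
  rw [hc s hs _ hmid, hc s hs t ht, abs_of_nonpos (by linarith), abs_of_nonpos (by linarith)]
  ring

theorem IsConical.dist_apply_le_of_isConsistent (hconic : IsConical σ) (hcons : IsConsistent σ)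
    (x y p q : X) {s t l : ℝ} (hs : 0 ≤ s) (hst : s ≤ t) (ht : t ≤ 1) (hl : l ∈ Icc (0 : ℝ) 1) :
    dist (σ p q l) (σ x y ((1 - l) * s + l * t)) ≤
      (1 - l) * dist p (σ x y s) + l * dist q (σ x y t) := by
  rw [← hcons x y s t l hs hst ht hl]
  exact hconic p q _ _ l hl

theorem IsCCC.two_mul_dist_midpoint_le (hσ : IsCCC σ) {c : ℝ → X} {L s t : ℝ}
    (hc : ∀ u ∈ Icc s t, ∀ v ∈ Icc s t, dist (c u) (c v) = |u - v| * L) (hst : s ≤ t)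
    (himg : σ (c s) (c t) '' Icc 0 1 = c '' Icc s t) (x y : X) (hs : 0 ≤ s) (ht : t ≤ 1) :
    2 * dist (c ((s + t) / 2)) (σ x y ((s + t) / 2)) ≤
      dist (c s) (σ x y s) + dist (c t) (σ x y t) := by
  have h := hσ.2.2.dist_apply_le_of_isConsistent hσ.2.1 x y (c s) (c t) hs hst ht
    (l := 1 / 2) ⟨by norm_num, by norm_num⟩
  rw [← hσ.1.midpoint_eq_apply_half hc hst himg,
    show (1 - 1 / 2) * s + 1 / 2 * t = (s + t) / 2 by ring] at h
  linarith

theorem IsCCC.eventually_two_mul_dist_le_add (hσ : IsCCC σ) {c : ℝ → X} {L : ℝ}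
    (hc : ∀ s ∈ Icc (0 : ℝ) 1, ∀ t ∈ Icc (0 : ℝ) 1, dist (c s) (c t) = |s - t| * L)
    {U : Set ℝ} (hU : IsOpen U)
    (himg : ∀ s ∈ U ∩ Icc (0 : ℝ) 1, ∀ t ∈ U ∩ Icc (0 : ℝ) 1, s ≤ t →
      σ (c s) (c t) '' Icc 0 1 = c '' Icc s t)
    {t : ℝ} (htU : t ∈ U) (ht : t ∈ Ioo (0 : ℝ) 1) (x y : X) :
    ∀ᶠ δ in 𝓝[>] 0, 2 * dist (c t) (σ x y t) ≤
      dist (c (t - δ)) (σ x y (t - δ)) + dist (c (t + δ)) (σ x y (t + δ)) := by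
  have hV : U ∩ Ioo 0 1 ∈ 𝓝 t := (hU.inter isOpen_Ioo).mem_nhds ⟨htU, ht⟩
  have hsub : Tendsto (fun δ => t - δ) (𝓝 0) (𝓝 t) := by
    simpa using (continuous_sub_left t).tendsto 0
  have hadd : Tendsto (fun δ => t + δ) (𝓝 0) (𝓝 t) := by
    simpa using (continuous_const_add t).tendsto 0
  filter_upwards [nhdsWithin_le_nhds ((hsub.eventually_mem hV).and (hadd.eventually_mem hV)),
    self_mem_nhdsWithin] with δ ⟨⟨hlU, hlI⟩, ⟨hrU, hrI⟩⟩ (hδ : 0 < δ)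
  have hsub_Icc : Icc (t - δ) (t + δ) ⊆ Icc 0 1 := Icc_subset_Icc hlI.1.le hrI.2.le
  have h := hσ.two_mul_dist_midpoint_le (fun u hu v hv => hc u (hsub_Icc hu) v (hsub_Icc hv))
    (by linarith) (himg _ ⟨hlU, Ioo_subset_Icc_self hlI⟩ _ ⟨hrU, Ioo_subset_Icc_self hrI⟩
      (by linarith)) x y hlI.1.le hrI.2.le
  rwa [show (t - δ + (t + δ)) / 2 = t by ring] at h

/-- **Local σ-geodesics are σ-geodesics** (Proposition `loctoglobgeod`): a constant-speed
geodesic `c : [0,1] → X` which is locally a σ-geodesic equals the σ-geodesic from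
`c(0)` to `c(1)`. -/
theorem local_to_global_geodesic
    (σ : X → X → ℝ → X) (hσ : IsCCC σ)
    (c : ℝ → X)
    (hc : ∀ s ∈ Set.Icc (0 : ℝ) 1, ∀ t ∈ Set.Icc (0 : ℝ) 1,
      dist (c s) (c t) = |s - t| * dist (c 0) (c 1))
    (hloc : ∃ 𝒰 : Set (Set ℝ), (∀ U ∈ 𝒰, IsOpen U) ∧ Set.Icc (0 : ℝ) 1 ⊆ ⋃₀ 𝒰 ∧
      ∀ U ∈ 𝒰, ∀ s ∈ U ∩ Set.Icc (0 : ℝ) 1, ∀ t ∈ U ∩ Set.Icc (0 : ℝ) 1, s ≤ t →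
        (fun l => σ (c s) (c t) l) '' Set.Icc (0 : ℝ) 1 = c '' Set.Icc s t) :
    ∀ t ∈ Set.Icc (0 : ℝ) 1, c t = σ (c 0) (c 1) t := by
  obtain ⟨𝒰, hUopen, hUcover, hUimg⟩ := hloc
  have hdev : ∀ t ∈ Icc (0 : ℝ) 1, dist (c t) (σ (c 0) (c 1) t) ≤ 0 := by
    refine nonpos_of_eventually_two_mul_le_add
      (continuous_dist.comp_continuousOn ((continuousOn_of_dist_eq_abs_sub_mul hc).prodMk
        (continuousOn_of_dist_eq_abs_sub_mul (hσ.1.2.2.2 _ _))))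
      (by rw [hσ.1.2.1, dist_self]) (by rw [hσ.1.2.2.1, dist_self]) fun t ht => ?_
    obtain ⟨U, hU, htU⟩ := mem_sUnion.1 (hUcover (Ioo_subset_Icc_self ht))
    exact hσ.eventually_two_mul_dist_le_add hc (hUopen U hU) (hUimg U hU) htU ht _ _
  exact fun t ht => dist_le_zero.1 (hdev t ht)
end

section
/- Let (X,d) be a metric space with a conical geodesic bicombing σ, let o ∈ X, and let g be an isometry of X that is σ-equivariant, i.e. g(σ(x,y,t)) = σ(g(x),g(y),t) for all x,y ∈ X and t ∈ [0,1]. Then for every x ∈ X and every r ≥ 0 one has d(ρ_o^{g(x)}(r), g(ρ_o^x(r))) ≤ d(o, g(o)). -/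
open Metric Set

variable {X : Type*} [MetricSpace X]

lemma rho_dist_le_aux (σ : X → X → ℝ → X) (hσ : IsGeodesicBicombing σ)
    (hconical : IsConical σ) (o o' y : X) (r : ℝ) (hr : 0 ≤ r) :
    dist (rho σ o y r) (rho σ o' y r) ≤ dist o o' := by
  obtain ⟨-, h0, h1, hspeed⟩ := hσ
  by_cases hyo : y = o
  · subst hyo
    have e0 : rho σ y y r = y := by simp [rho]
    rw [e0]
    by_cases hyo' : y = o'
    · simp [rho, hyo', dist_comm]
    · have e1 : rho σ o' y r = σ o' y (min (r / dist o' y) 1) := by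
        simp [rho, hyo']
      rw [e1]
      have hb : 0 < dist o' y := dist_pos.mpr (Ne.symm hyo')
      set t' : ℝ := min (r / dist o' y) 1 with ht'def
      have ht' : t' ∈ Set.Icc (0 : ℝ) 1 :=
        ⟨le_min (div_nonneg hr hb.le) zero_le_one, min_le_right _ _⟩
      have hd := hspeed o' y 1 ⟨zero_le_one, le_refl 1⟩ t' ht'
      rw [h1] at hd
      rw [hd, abs_of_nonneg (by linarith [ht'.2])]
      calc (1 - t') * dist o' y ≤ 1 * dist o' y := by
            apply mul_le_mul_of_nonneg_right _ hb.le
            linarith [ht'.1]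
        _ = dist y o' := by rw [one_mul, dist_comm]
  · by_cases hyo' : y = o'
    · -- y ≠ o, y = o'
      subst hyo'
      have e0 : rho σ y y r = y := by simp [rho]
      have e1 : rho σ o y r = σ o y (min (r / dist o y) 1) := by
        simp [rho, hyo]
      rw [e0, e1]
      have ha : 0 < dist o y := dist_pos.mpr (Ne.symm hyo)
      set t : ℝ := min (r / dist o y) 1 with htdef
      have ht : t ∈ Set.Icc (0 : ℝ) 1 :=
        ⟨le_min (div_nonneg hr ha.le) zero_le_one, min_le_right _ _⟩
      have hd := hspeed o y t ht 1 ⟨zero_le_one, le_refl 1⟩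
      rw [h1] at hd
      rw [hd, abs_of_nonpos (by linarith [ht.2]), neg_sub]
      calc (1 - t) * dist o y ≤ 1 * dist o y := by
            apply mul_le_mul_of_nonneg_right _ ha.le
            linarith [ht.1]
        _ = dist o y := one_mul _
    · -- main case
      have e1 : rho σ o y r = σ o y (min (r / dist o y) 1) := by simp [rho, hyo]
      have e2 : rho σ o' y r = σ o' y (min (r / dist o' y) 1) := by simp [rho, hyo']
      rw [e1, e2]
      have ha : 0 < dist o y := dist_pos.mpr (Ne.symm hyo)
      have hb : 0 < dist o' y := dist_pos.mpr (Ne.symm hyo')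
      set a := dist o y with hadef
      set b := dist o' y with hbdef
      set t : ℝ := min (r / a) 1 with htdef
      set t' : ℝ := min (r / b) 1 with ht'def
      have ht : t ∈ Set.Icc (0 : ℝ) 1 :=
        ⟨le_min (div_nonneg hr ha.le) zero_le_one, min_le_right _ _⟩
      have ht' : t' ∈ Set.Icc (0 : ℝ) 1 :=
        ⟨le_min (div_nonneg hr hb.le) zero_le_one, min_le_right _ _⟩
      have habs : |b - a| ≤ dist o o' := by
        rw [abs_sub_comm]; exact abs_dist_sub_le o o' y
      have key : |t - t'| * b ≤ t * |b - a| := by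
        rcases le_or_gt r a with hra | hra <;> rcases le_or_gt r b with hrb | hrb
        · have e1 : t = r / a := min_eq_left (by rw [div_le_one ha]; exact hra)
          have e2 : t' = r / b := min_eq_left (by rw [div_le_one hb]; exact hrb)
          have heq : (t - t') * b = t * (b - a) := by
            rw [e1, e2]; field_simp
          have heq2 : |t - t'| * b = t * |b - a| := by
            rw [show |t - t'| * b = |(t - t') * b| by rw [abs_mul, abs_of_nonneg hb.le],
              heq, abs_mul, abs_of_nonneg ht.1]
          exact le_of_eq heq2
        · -- r ≤ a, b < r : t' = 1
          have e1 : t = r / a := min_eq_left (by rw [div_le_one ha]; exact hra)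
          have e2 : t' = 1 := min_eq_right (by rw [le_div_iff₀ hb, one_mul]; exact hrb.le)
          have hba : b < a := lt_of_lt_of_le hrb hra
          rw [e2, abs_of_nonpos (by linarith [ht.2]), abs_of_nonpos (by linarith)]
          have hta : t * a = r := by rw [e1]; field_simp
          nlinarith [ht.1, ht.2]
        · -- a < r ≤ b : t = 1
          have e1 : t = 1 := min_eq_right (by rw [le_div_iff₀ ha, one_mul]; exact hra.le)
          have e2 : t' = r / b := min_eq_left (by rw [div_le_one hb]; exact hrb)
          have hab : a < b := lt_of_lt_of_le hra hrb
          rw [e1, abs_of_nonneg (by linarith [ht'.2]), abs_of_nonneg (by linarith), one_mul]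
          have ht'b : t' * b = r := by rw [e2]; field_simp
          nlinarith [ht'.1, ht'.2]
        · have e1 : t = 1 := min_eq_right (by rw [le_div_iff₀ ha, one_mul]; exact hra.le)
          have e2 : t' = 1 := min_eq_right (by rw [le_div_iff₀ hb, one_mul]; exact hrb.le)
          rw [e1, e2]
          simp [abs_nonneg]
      calc dist (σ o y t) (σ o' y t')
          ≤ dist (σ o y t) (σ o' y t) + dist (σ o' y t) (σ o' y t') :=
            dist_triangle _ _ _
        _ ≤ ((1 - t) * dist o o' + t * dist y y) + |t - t'| * b := by
            gcongr
            · exact hconical o y o' y t ht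
            · exact le_of_eq (hspeed o' y t ht t' ht')
        _ = (1 - t) * dist o o' + |t - t'| * b := by simp
        _ ≤ (1 - t) * dist o o' + t * |b - a| := by linarith [key]
        _ ≤ (1 - t) * dist o o' + t * dist o o' := by
            have := mul_le_mul_of_nonneg_left habs ht.1
            linarith
        _ = dist o o' := by ring

/-- **Coarse equivariance of the combing `ρ`** (from the proof of Theorem A):
for a σ-equivariant isometry `g`, `d(ρ_o^{g(x)}(r), g(ρ_o^x(r))) ≤ d(o, g(o))`. -/
theorem rho_coarse_equivariance
    (σ : X → X → ℝ → X) (hσ : IsGeodesicBicombing σ) (hconical : IsConical σ)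
    (o : X) (g : X → X) (hbij : Function.Bijective g)
    (hiso : ∀ x y : X, dist (g x) (g y) = dist x y)
    (hequiv : ∀ x y : X, ∀ t ∈ Set.Icc (0 : ℝ) 1, g (σ x y t) = σ (g x) (g y) t) :
    ∀ (x : X) (r : ℝ), 0 ≤ r →
      dist (rho σ o (g x) r) (g (rho σ o x r)) ≤ dist o (g o) := by
  intro x r hr
  have hge : g (rho σ o x r) = rho σ (g o) (g x) r := by
    by_cases hxo : x = o
    · subst hxo
      simp [rho]
    · have hgxo : g x ≠ g o := fun h => hxo (hbij.1 h)
      simp only [rho, if_neg hxo, if_neg hgxo, hiso o x]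
      have ha : 0 < dist o x := dist_pos.mpr (Ne.symm hxo)
      exact hequiv o x _ ⟨le_min (div_nonneg hr ha.le) zero_le_one, min_le_right _ _⟩
  rw [hge]
  exact rho_dist_le_aux σ hσ hconical o (g o) (g x) r hr
end
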